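/- arXiv:1109.3547 — 3 statements merged into one kernel-verified Lean document; each statement's English description precedes it below -/
import Mathlib

section
/- In the static placement model there exist a constant K > 0 and n₀ (depending only on C, α, c₁, c₂) such that for all n ≥ n₀ and any two distinct fixed nodes, the probability that the two nodes choose the same cell in one round is at most K·n^{−(1−1/α)}. -/
open scoped Classical
open Finset

/-- Probability that a single node chooses cell `v`: proportional to the
attractiveness `a v`. -/
noncomputable def cellProb {N : ℕ} (a : Fin N → ℕ) (v : Fin N) : ℝ :=
  (a v : ℝ) / ∑ w : Fin N, (a w : ℝ)

/-- Probability of an event `E` about the (independent) cell choices of the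
`n` nodes in one round. -/
noncomputable def roundProb (n : ℕ) {N : ℕ} (a : Fin N → ℕ)
    (E : Set (Fin n → Fin N)) : ℝ :=
  ∑ f : Fin n → Fin N, E.indicator (fun g => ∏ i : Fin n, cellProb a (g i)) f

/-- Expectation of a random variable `X` of the cell choices of the `n`
nodes in one round. -/
noncomputable def roundExp (n : ℕ) {N : ℕ} (a : Fin N → ℕ)
    (X : (Fin n → Fin N) → ℝ) : ℝ :=
  ∑ f : Fin n → Fin N, (∏ i : Fin n, cellProb a (f i)) * X f

/-- The static placement model: `N = ⌈C·n⌉` cells, each with an integer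
attractiveness in `[2, (C·n)^(1/α)]`, such that the number of cells of
attractiveness `d` is between `c₁·C·n/d^α` and `c₂·C·n/d^α`. -/
structure PlacementModel (C α c₁ c₂ : ℝ) (n N : ℕ) (a : Fin N → ℕ) : Prop where
  hC : 1 ≤ C
  hα : 2 < α
  hc₁ : 0 < c₁
  hc₁₂ : c₁ ≤ c₂
  hn : 0 < n
  hN : N = ⌈C * (n : ℝ)⌉₊
  ha_lb : ∀ v, 2 ≤ a v
  ha_ub : ∀ v, (a v : ℝ) ≤ (C * (n : ℝ)) ^ (1 / α)
  hcount_lb : ∀ d : ℕ, 2 ≤ d → (d : ℝ) ≤ (C * (n : ℝ)) ^ (1 / α) →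
    c₁ * C * (n : ℝ) / (d : ℝ) ^ α ≤
      ((Finset.univ.filter (fun v => a v = d)).card : ℝ)
  hcount_ub : ∀ d : ℕ, 2 ≤ d → (d : ℝ) ≤ (C * (n : ℝ)) ^ (1 / α) →
    ((Finset.univ.filter (fun v => a v = d)).card : ℝ) ≤
      c₂ * C * (n : ℝ) / (d : ℝ) ^ α

lemma collision_sum_eq {n N : ℕ} (p : Fin N → ℝ) (hp : ∑ v, p v = 1)
    {i j : Fin n} (hij : i ≠ j) :
    ∑ f : Fin n → Fin N,
      ({g : Fin n → Fin N | g i = g j}).indicator (fun g => ∏ k, p (g k)) f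
      = ∑ v, p v * p v := by
  have key : ∀ f : Fin n → Fin N,
      ({g : Fin n → Fin N | g i = g j}).indicator (fun g => ∏ k, p (g k)) f
        = ∑ v : Fin N, ∏ k : Fin n,
            (if k = i ∨ k = j then (if f k = v then p (f k) else 0) else p (f k)) := by
    intro f
    by_cases hf : f i = f j
    · rw [Set.indicator_of_mem (show f ∈ {g : Fin n → Fin N | g i = g j} from hf)]
      rw [Finset.sum_eq_single (f i)]
      · refine (Finset.prod_congr rfl fun k _ => ?_).symm
        by_cases hk : k = i ∨ k = j
        · have hfk : f k = f i := by
            rcases hk with rfl | rfl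
            · rfl
            · exact hf.symm
          simp [hk, hfk]
        · simp [hk]
      · intro v _ hv
        refine Finset.prod_eq_zero (Finset.mem_univ i) ?_
        simp [Ne.symm hv]
      · intro h; exact absurd (Finset.mem_univ _) h
    · rw [Set.indicator_of_notMem (show f ∉ {g : Fin n → Fin N | g i = g j} from hf)]
      refine (Finset.sum_eq_zero fun v _ => ?_).symm
      by_cases hv : f i = v
      · refine Finset.prod_eq_zero (Finset.mem_univ j) ?_
        have : f j ≠ v := fun h => hf (hv.trans h.symm)
        simp [this]
      · exact Finset.prod_eq_zero (Finset.mem_univ i) (by simp [hv])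
  rw [Finset.sum_congr rfl fun f _ => key f, Finset.sum_comm]
  refine Finset.sum_congr rfl fun v _ => ?_
  have hfac : ∑ f : Fin n → Fin N, ∏ k : Fin n,
      (if k = i ∨ k = j then (if f k = v then p (f k) else 0) else p (f k))
      = ∏ k : Fin n, ∑ w : Fin N,
        (if k = i ∨ k = j then (if w = v then p w else 0) else p w) := by
    rw [Finset.prod_univ_sum]
    rw [Fintype.piFinset_univ]
  rw [hfac]
  have hsum : ∀ k : Fin n, (∑ w : Fin N,
      (if k = i ∨ k = j then (if w = v then p w else 0) else p w))
      = if k ∈ ({i, j} : Finset (Fin n)) then p v else 1 := by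
    intro k
    by_cases hk : k = i ∨ k = j
    · simp only [hk, if_true, Finset.sum_ite_eq' Finset.univ v p, Finset.mem_univ, if_true]
      simp [Finset.mem_insert, hk]
    · simp only [hk, if_false, hp]
      simp [Finset.mem_insert, hk]
  rw [Finset.prod_congr rfl fun k _ => hsum k, Finset.prod_ite_mem,
    Finset.univ_inter, Finset.prod_pair hij]

/-- In the static placement model there exist a constant `K > 0` and `n₀`
(depending only on `C, α, c₁, c₂`) such that for all `n ≥ n₀` and any two
distinct fixed nodes, the probability that the two nodes choose the same cell
in one round is at most `K · n^(−(1−1/α))`. -/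
theorem collision_probability_bound (C α c₁ c₂ : ℝ) (hC : 1 ≤ C) (hα : 2 < α)
    (hc₁ : 0 < c₁) (hc₁₂ : c₁ ≤ c₂) :
    ∃ K : ℝ, 0 < K ∧ ∃ n₀ : ℕ, ∀ n : ℕ, n₀ ≤ n →
      ∀ (N : ℕ) (a : Fin N → ℕ), PlacementModel C α c₁ c₂ n N a →
        ∀ i j : Fin n, i ≠ j →
          roundProb n a {f | f i = f j} ≤ K * (n : ℝ) ^ (-(1 - 1 / α)) := by
  refine ⟨C ^ (1 / α), Real.rpow_pos_of_pos (lt_of_lt_of_le one_pos hC) _, 1, ?_⟩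
  intro n hn N a hM i j hij
  have hα0 : 0 < α := by linarith
  have hn0 : (0 : ℝ) < n := by exact_mod_cast hM.hn
  have hC0 : (0 : ℝ) < C := lt_of_lt_of_le one_pos hC
  set S : ℝ := ∑ w : Fin N, (a w : ℝ) with hSdef
  have hNge : C * n ≤ (N : ℝ) := by rw [hM.hN]; exact Nat.le_ceil _
  have h2N : 2 * (N : ℝ) ≤ S := by
    have h : ∑ _w : Fin N, (2 : ℝ) ≤ ∑ w : Fin N, (a w : ℝ) :=
      Finset.sum_le_sum (fun w _ => show (2:ℝ) ≤ (a w : ℝ) by exact_mod_cast hM.ha_lb w)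
    simpa [mul_comm] using h
  have hS2n : 2 * (n : ℝ) ≤ S := by nlinarith
  have hSpos : 0 < S := by nlinarith
  have hp1 : ∑ v, cellProb a v = 1 := by
    simp only [cellProb, ← Finset.sum_div]
    exact div_self hSpos.ne'
  have hkey : roundProb n a {f | f i = f j} = ∑ v, cellProb a v * cellProb a v :=
    collision_sum_eq (cellProb a) hp1 hij
  rw [hkey]
  set M : ℝ := (C * n) ^ (1 / α) with hMdef
  have hM1 : 0 ≤ M := Real.rpow_nonneg (by positivity) _
  have hpv_nonneg : ∀ v : Fin N, 0 ≤ cellProb a v :=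
    fun v => div_nonneg (Nat.cast_nonneg _) hSpos.le
  have hpv_le : ∀ v : Fin N, cellProb a v ≤ M / S := by
    intro v
    exact div_le_div_of_nonneg_right (hM.ha_ub v) hSpos.le
  calc ∑ v, cellProb a v * cellProb a v
      ≤ ∑ v, M / S * cellProb a v :=
        Finset.sum_le_sum fun v _ =>
          mul_le_mul_of_nonneg_right (hpv_le v) (hpv_nonneg v)
    _ = M / S := by rw [← Finset.mul_sum, hp1, mul_one]
    _ ≤ M / (2 * n) := div_le_div_of_nonneg_left hM1 (by positivity) hS2n
    _ ≤ C ^ (1 / α) * (n : ℝ) ^ (-(1 - 1 / α)) := by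
        have hMeq : M = C ^ (1 / α) * (n : ℝ) ^ (1 / α) :=
          Real.mul_rpow hC0.le hn0.le
        have hr : (n : ℝ) ^ (-(1 - 1 / α)) = (n : ℝ) ^ (1 / α) / n := by
          rw [show -(1 - 1 / α) = 1 / α - 1 by ring, Real.rpow_sub hn0, Real.rpow_one]
        rw [hMeq, hr, mul_div_assoc]
        have hC1 : (0 : ℝ) ≤ C ^ (1 / α) := Real.rpow_nonneg hC0.le _
        refine mul_le_mul_of_nonneg_left ?_ hC1
        exact div_le_div_of_nonneg_left (Real.rpow_nonneg hn0.le _) hn0 (by linarith)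
end

section
/- (Lemma 'hilfslemmatheo'.) Let m ≥ 2 be an integer and let (X_t)_{t≥1} be a stochastic process on a probability space, adapted to a filtration (F_t), taking values in {1, …, m}, and suppose there are constants c₁ ∈ (0,1) and c₂ ∈ (0,1) such that for every t ≥ 1, almost surely the conditional probability Pr[X_{t+1} ≤ c₁·X_t | F_t] ≥ 1 − X_t^{−c₂}. Let T = min{t ∈ ℕ : X_t = 1}. Then there exists a constant K (depending only on c₁ and c₂) such that for all sufficiently large m, Pr[T ≤ K·(log m)²] ≥ 1 − m^{−4}. -/
/-!
Descending greedily, `x ↦ ⌊c₁ x⌋`, leads from `m` to `1` in `D ≈ log m / log c₁⁻¹` steps. The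
probability that the process follows such a descent is bounded below by a constant `δ > 0`
independent of the starting point: each step from `x` succeeds with probability at least
`1 - x ^ (-c₂)`, and along a descent these failure probabilities form a geometric series. Hence
every window of `D` steps hits `1` with conditional probability at least `δ`, so `⌈4 log m / δ⌉`
consecutive windows, which last `O((log m)²)` steps, all miss `1` with probability at most
`(1 - δ) ^ (4 log m / δ) ≤ m⁻⁴`.
-/

open MeasureTheory

/-- For `c < 1` and `x ≥ 1` this is `⌊c x⌋₊`; the `min` makes the recursions below terminate
for every `c`. -/
noncomputable def descentStep (c : ℝ) (x : ℕ) : ℕ := min ⌊c * x⌋₊ (x - 1)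

lemma descentStep_lt {c : ℝ} {x : ℕ} (hx : 1 ≤ x) : descentStep c x < x :=
  (min_le_right _ _).trans_lt (by omega)

lemma descentStep_mono {c : ℝ} (hc : 0 ≤ c) : Monotone (descentStep c) := fun a b hab =>
  min_le_min (Nat.floor_le_floor (by gcongr)) (by omega)

lemma descentStep_le_mul {c : ℝ} (hc : 0 ≤ c) (x : ℕ) : (descentStep c x : ℝ) ≤ c * x :=
  calc (descentStep c x : ℝ) ≤ ⌊c * x⌋₊ := by exact_mod_cast min_le_left _ _
    _ ≤ c * x := Nat.floor_le (by positivity)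

noncomputable def descentDepth (c : ℝ) (x : ℕ) : ℕ :=
  if x ≤ 1 then 0 else descentDepth c (descentStep c x) + 1
termination_by x
decreasing_by exact descentStep_lt (by omega)

lemma descentDepth_of_le_one (c : ℝ) {x : ℕ} (hx : x ≤ 1) : descentDepth c x = 0 := by
  rw [descentDepth, if_pos hx]

lemma descentDepth_of_two_le (c : ℝ) {x : ℕ} (hx : 2 ≤ x) :
    descentDepth c x = descentDepth c (descentStep c x) + 1 := by
  rw [descentDepth, if_neg (by omega)]

lemma descentDepth_mono {c : ℝ} (hc : 0 ≤ c) : Monotone (descentDepth c) := by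
  intro a b hab
  induction b using Nat.strong_induction_on generalizing a with
  | _ b ih =>
    rcases le_or_gt a 1 with ha | ha
    · simp [descentDepth_of_le_one c ha]
    rw [descentDepth_of_two_le c (by omega : 2 ≤ a), descentDepth_of_two_le c (by omega : 2 ≤ b)]
    exact Nat.succ_le_succ (ih _ (descentStep_lt (by omega)) (descentStep_mono hc hab))

lemma descentDepth_le_log {c : ℝ} (hc : 0 < c) (hc' : c < 1) {x : ℕ} (hx : 1 ≤ x) :
    (descentDepth c x : ℝ) ≤ Real.log x / Real.log c⁻¹ + 1 := by
  have hL : 0 < Real.log c⁻¹ := Real.log_pos (one_lt_inv_iff₀.2 ⟨hc, hc'⟩)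
  induction x using Nat.strong_induction_on with
  | _ x ih =>
    have hlog_div : 0 ≤ Real.log x / Real.log c⁻¹ :=
      div_nonneg (Real.log_nonneg (by exact_mod_cast hx)) hL.le
    rcases le_or_gt x 1 with h1 | h1
    · rw [descentDepth_of_le_one c h1]; push_cast; linarith
    rw [descentDepth_of_two_le c h1]
    set n := descentStep c x
    rcases Nat.eq_zero_or_pos n with hn | hn
    · rw [hn, descentDepth_of_le_one c zero_le_one]; push_cast; linarith
    have hlog : Real.log n ≤ Real.log x - Real.log c⁻¹ := by
      rw [Real.log_inv, sub_neg_eq_add, add_comm, ← Real.log_mul hc.ne' (by positivity)]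
      exact Real.log_le_log (by exact_mod_cast hn) (descentStep_le_mul hc.le x)
    have := ih n (descentStep_lt (by omega)) hn
    have : Real.log n / Real.log c⁻¹ ≤ Real.log x / Real.log c⁻¹ - 1 := by
      rw [le_sub_iff_add_le, div_add_one hL.ne', div_le_div_iff_of_pos_right hL]; linarith
    push_cast; linarith

/-- A lower bound for the probability that the process, started anywhere in `{1, …, x}`, hits `1`
within `descentDepth c₁ x` steps: from `x` it either starts lower or makes the descent
`x ↦ descentStep c₁ x`, which succeeds with probability at least `1 - x ^ (-c₂)`. -/
noncomputable def descentProb (c₁ c₂ : ℝ) (x : ℕ) : ℝ :=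
  if x ≤ 1 then 1 else
    min (descentProb c₁ c₂ (x - 1)) ((1 - (x : ℝ) ^ (-c₂)) * descentProb c₁ c₂ (descentStep c₁ x))
termination_by x
decreasing_by
  · omega
  · exact descentStep_lt (by omega)

section descentProb

variable {c₁ c₂ : ℝ}

lemma descentProb_of_le_one {x : ℕ} (hx : x ≤ 1) : descentProb c₁ c₂ x = 1 := by
  rw [descentProb, if_pos hx]

lemma descentProb_of_two_le {x : ℕ} (hx : 2 ≤ x) :
    descentProb c₁ c₂ x = min (descentProb c₁ c₂ (x - 1))
      ((1 - (x : ℝ) ^ (-c₂)) * descentProb c₁ c₂ (descentStep c₁ x)) := by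
  rw [descentProb, if_neg (by omega)]

lemma rpow_neg_lt_one_of_two_le (hc₂ : 0 < c₂) {x : ℕ} (hx : 2 ≤ x) : (x : ℝ) ^ (-c₂) < 1 :=
  Real.rpow_lt_one_of_one_lt_of_neg (by exact_mod_cast hx) (neg_neg_of_pos hc₂)

lemma rpow_neg_le_rpow_neg_of_le (hc₂ : 0 ≤ c₂) {a b : ℕ} (ha : 1 ≤ a) (hab : a ≤ b) :
    (b : ℝ) ^ (-c₂) ≤ (a : ℝ) ^ (-c₂) :=
  Real.rpow_le_rpow_of_nonpos (by exact_mod_cast ha) (by exact_mod_cast hab) (by linarith)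

lemma descentProb_pos (hc₂ : 0 < c₂) (x : ℕ) : 0 < descentProb c₁ c₂ x := by
  induction x using Nat.strong_induction_on with
  | _ x ih =>
    rcases le_or_gt x 1 with h1 | h1
    · rw [descentProb_of_le_one h1]; exact one_pos
    rw [descentProb_of_two_le h1]
    exact lt_min (ih _ (by omega)) (mul_pos (sub_pos.2 (rpow_neg_lt_one_of_two_le hc₂ h1))
      (ih _ (descentStep_lt (by omega))))

lemma descentProb_antitone : Antitone (descentProb c₁ c₂) := by
  refine antitone_nat_of_succ_le fun x => ?_
  rcases le_or_gt x 0 with h0 | h0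
  · rw [descentProb_of_le_one (by omega), descentProb_of_le_one (h0.trans zero_le_one)]
  rw [descentProb_of_two_le (by omega)]
  exact min_le_left _ _

lemma one_add_mul_rpow_neg_le_of_le_mul (hc₁ : 0 ≤ c₁) (hc₂ : 0 ≤ c₂) {β : ℝ} (hβ : 0 ≤ β)
    (hβc : β * c₁ ^ (-c₂) = 1 + β) {n x : ℕ} (hn : 1 ≤ n) (hnx : (n : ℝ) ≤ c₁ * x) :
    (1 + β) * (x : ℝ) ^ (-c₂) ≤ β * (n : ℝ) ^ (-c₂) := by
  have h := Real.rpow_le_rpow_of_nonpos (by exact_mod_cast hn) hnx (neg_nonpos.2 hc₂)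
  rw [Real.mul_rpow hc₁ (Nat.cast_nonneg x)] at h
  rw [← hβc, mul_assoc]
  exact mul_le_mul_of_nonneg_left h hβ

/-- Above a threshold `a`, the product of the factors `1 - y ^ (-c₂)` along a descent is at least
`1 - ∑ y ^ (-c₂)`, and the potential `β y ^ (-c₂)` bounds this geometric sum. -/
lemma potential_mul_descentProb_le (hc₁ : 0 ≤ c₁) (hc₂ : 0 < c₂) {β : ℝ} (hβ : 0 ≤ β)
    (hβc : β * c₁ ^ (-c₂) = 1 + β) {a : ℕ} (ha : 1 ≤ a) {x : ℕ} (hax : a ≤ x) :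
    (1 - (1 + β) * (a : ℝ) ^ (-c₂) + β * (x : ℝ) ^ (-c₂)) * descentProb c₁ c₂ a ≤
      descentProb c₁ c₂ x := by
  set q := descentProb c₁ c₂ a
  set σ : ℕ → ℝ := fun y => 1 - (1 + β) * (a : ℝ) ^ (-c₂) + β * (y : ℝ) ^ (-c₂)
  have hq : 0 ≤ q := (descentProb_pos hc₂ a).le
  have hσ_le_one {y : ℕ} (hy : a ≤ y) : σ y ≤ 1 := by
    have := rpow_neg_le_rpow_neg_of_le hc₂.le ha hy
    have := Real.rpow_nonneg (Nat.cast_nonneg a) (-c₂)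
    simp only [σ]; nlinarith
  have hσ_anti {y z : ℕ} (hy : 1 ≤ y) (hyz : y ≤ z) : σ z ≤ σ y := by
    have := rpow_neg_le_rpow_neg_of_le hc₂.le hy hyz
    simp only [σ]; nlinarith
  induction x using Nat.strong_induction_on with
  | _ x ih =>
    rcases le_or_gt x 1 with h1 | h1
    · obtain rfl : a = x := by omega
      simpa using mul_le_of_le_one_left hq (hσ_le_one le_rfl)
    have hx_rpow := rpow_neg_lt_one_of_two_le hc₂ h1
    have hx_rpow_nonneg := Real.rpow_nonneg (Nat.cast_nonneg x) (-c₂)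
    rw [descentProb_of_two_le h1]
    refine le_min ?_ ?_
    · rcases lt_or_ge (x - 1) a with hxa | hxa
      · calc σ x * q ≤ q := mul_le_of_le_one_left hq (hσ_le_one hax)
          _ ≤ descentProb c₁ c₂ (x - 1) := descentProb_antitone (by omega)
      · exact (mul_le_mul_of_nonneg_right (hσ_anti (by omega) (by omega)) hq).trans
          (ih _ (by omega) hxa)
    set n := descentStep c₁ x
    rcases lt_or_ge n a with hna | hna
    · have : σ x ≤ 1 - (x : ℝ) ^ (-c₂) := by
        have := rpow_neg_le_rpow_neg_of_le hc₂.le ha hax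
        simp only [σ]; nlinarith
      calc σ x * q ≤ (1 - (x : ℝ) ^ (-c₂)) * q := mul_le_mul_of_nonneg_right this hq
        _ ≤ (1 - (x : ℝ) ^ (-c₂)) * descentProb c₁ c₂ n :=
          mul_le_mul_of_nonneg_left (descentProb_antitone hna.le) (by linarith)
    have hdrop : σ x + (x : ℝ) ^ (-c₂) ≤ σ n := by
      have := one_add_mul_rpow_neg_le_of_le_mul hc₁ hc₂.le hβ hβc (by omega : 1 ≤ n)
        (descentStep_le_mul hc₁ x)
      simp only [σ]; linarith
    have := hσ_le_one hna
    calc σ x * q ≤ (1 - (x : ℝ) ^ (-c₂)) * (σ n * q) := by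
          nlinarith [mul_nonneg (mul_nonneg hx_rpow_nonneg (sub_nonneg.2 this)) hq]
      _ ≤ (1 - (x : ℝ) ^ (-c₂)) * descentProb c₁ c₂ n :=
        mul_le_mul_of_nonneg_left (ih n (descentStep_lt (by omega)) hna) (by linarith)

lemma exists_pos_le_descentProb (hc₁ : 0 < c₁) (hc₁' : c₁ < 1) (hc₂ : 0 < c₂) :
    ∃ δ > 0, ∀ x, δ ≤ descentProb c₁ c₂ x := by
  have hc : 1 < c₁ ^ (-c₂) := Real.one_lt_rpow_of_pos_of_lt_one_of_neg hc₁ hc₁' (by linarith)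
  set β := (c₁ ^ (-c₂) - 1)⁻¹
  have hβ : 0 < β := inv_pos.2 (by linarith)
  have hβc : β * c₁ ^ (-c₂) = 1 + β := by
    simp only [β]; field_simp [(sub_pos.2 hc).ne']; ring
  have hlim : Filter.Tendsto (fun y : ℕ => (1 + β) * (y : ℝ) ^ (-c₂)) Filter.atTop (nhds 0) := by
    simpa using ((tendsto_rpow_neg_atTop hc₂).comp tendsto_natCast_atTop_atTop).const_mul (1 + β)
  obtain ⟨a, has, ha⟩ :=
    ((hlim.eventually (gt_mem_nhds one_pos)).and (Filter.eventually_ge_atTop 1)).exists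
  refine ⟨(1 - (1 + β) * (a : ℝ) ^ (-c₂)) * descentProb c₁ c₂ a,
    mul_pos (by linarith) (descentProb_pos hc₂ a), fun x => ?_⟩
  have hq := descentProb_pos (c₁ := c₁) hc₂ a
  have hs := Real.rpow_nonneg (Nat.cast_nonneg a) (-c₂)
  rcases le_or_gt a x with hax | hax
  · refine le_trans ?_ (potential_mul_descentProb_le hc₁.le hc₂ hβ.le hβc ha hax)
    have := Real.rpow_nonneg (Nat.cast_nonneg x) (-c₂)
    nlinarith [mul_nonneg (mul_nonneg hβ.le this) hq.le]
  · calc _ ≤ descentProb c₁ c₂ a := mul_le_of_le_one_left hq.le (by nlinarith)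
      _ ≤ descentProb c₁ c₂ x := descentProb_antitone hax.le

end descentProb

lemma mul_measureReal_le_of_le_condExp {Ω : Type*} {m m₀ : MeasurableSpace Ω} {μ : Measure Ω}
    [IsFiniteMeasure μ] (hm : m ≤ m₀) {A E : Set Ω} (hA : MeasurableSet[m] A)
    (hE : MeasurableSet[m₀] E) {p : ℝ}
    (hp : ∀ᵐ ω ∂μ, ω ∈ A → p ≤ μ[E.indicator (fun _ => (1 : ℝ)) | m] ω) :
    p * μ.real A ≤ μ.real (A ∩ E) :=
  calc p * μ.real A = ∫ _ in A, p ∂μ := by rw [setIntegral_const, smul_eq_mul, mul_comm]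
    _ ≤ ∫ ω in A, μ[E.indicator (fun _ => (1 : ℝ)) | m] ω ∂μ := by
      refine setIntegral_mono_ae_restrict (integrableOn_const) integrable_condExp.integrableOn ?_
      filter_upwards [ae_restrict_of_ae hp, ae_restrict_mem (hm _ hA)] with ω hω hωA using hω hωA
    _ = ∫ ω in A, E.indicator (fun _ => (1 : ℝ)) ω ∂μ :=
      setIntegral_condExp hm ((integrable_const 1).indicator hE) hA
    _ = μ.real (A ∩ E) := by
      rw [setIntegral_indicator hE, setIntegral_const, smul_eq_mul, mul_one]

section process

variable {Ω : Type*} {X : ℕ → Ω → ℕ}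

def hitsOneIn (X : ℕ → Ω → ℕ) (a b : ℕ) : Set Ω := {ω | ∃ s, a ≤ s ∧ s ≤ b ∧ X s ω = 1}

lemma hitsOneIn_mono {a a' b b' : ℕ} (ha : a' ≤ a) (hb : b ≤ b') :
    hitsOneIn X a b ⊆ hitsOneIn X a' b' := fun _ ⟨s, has, hsb, hs⟩ =>
  ⟨s, ha.trans has, hsb.trans hb, hs⟩

variable [MeasurableSpace Ω] {μ : Measure Ω} {ℱ : Filtration ℕ ‹MeasurableSpace Ω›}

lemma measurableSet_hitsOneIn (hadapt : ∀ t, 1 ≤ t → Measurable[ℱ t] (X t)) {a b : ℕ}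
    (ha : 1 ≤ a) : MeasurableSet[ℱ b] (hitsOneIn X a b) := by
  have : hitsOneIn X a b = ⋃ s, ⋃ (_ : a ≤ s ∧ s ≤ b), X s ⁻¹' {1} := by
    ext; simp [hitsOneIn, and_assoc]
  rw [this]
  exact .iUnion fun s => .iUnion fun hs =>
    ℱ.mono hs.2 _ (hadapt s (ha.trans hs.1) (measurableSet_singleton 1))

def DescentDrift (μ : Measure Ω) (ℱ : Filtration ℕ ‹MeasurableSpace Ω›) (X : ℕ → Ω → ℕ)
    (c₁ c₂ : ℝ) : Prop :=
  ∀ t, 1 ≤ t → ∀ᵐ ω ∂μ, 1 - (X t ω : ℝ) ^ (-c₂) ≤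
    μ[{ω' | (X (t + 1) ω' : ℝ) ≤ c₁ * X t ω'}.indicator (fun _ => (1 : ℝ)) | ℱ t] ω

variable [IsFiniteMeasure μ] {c₁ c₂ : ℝ}

lemma one_sub_rpow_mul_measureReal_le (hc₁' : c₁ < 1)
    (hadapt : ∀ t, 1 ≤ t → Measurable[ℱ t] (X t)) (hdrift : DescentDrift μ ℱ X c₁ c₂)
    {t x : ℕ} (ht : 1 ≤ t) (hx : 1 ≤ x) {A : Set Ω} (hA : MeasurableSet[ℱ t] A)
    (hAx : ∀ ω ∈ A, X t ω = x) :
    (1 - (x : ℝ) ^ (-c₂)) * μ.real A ≤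
      μ.real (A ∩ {ω | X (t + 1) ω ≤ descentStep c₁ x}) := by
  have hmeas (s : ℕ) (hs : 1 ≤ s) : Measurable fun ω => (X s ω : ℝ) :=
    measurable_from_top.comp ((hadapt s hs).mono (ℱ.le s) le_rfl)
  set E := {ω | (X (t + 1) ω : ℝ) ≤ c₁ * X t ω}
  have hE : MeasurableSet E := measurableSet_le (hmeas _ (by omega)) ((hmeas t ht).const_mul c₁)
  refine (mul_measureReal_le_of_le_condExp (ℱ.le t) hA hE ?_).trans
    (measureReal_mono fun ω ⟨hωA, hωE⟩ => ⟨hωA, ?_⟩)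
  · filter_upwards [hdrift t ht] with ω hω hωA
    rwa [hAx ω hωA] at hω
  · have hle : (X (t + 1) ω : ℝ) ≤ c₁ * x := by
      rw [← hAx ω hωA]; exact hωE
    have hlt : X (t + 1) ω < x := by
      exact_mod_cast hle.trans_lt (mul_lt_of_lt_one_left (by positivity) hc₁')
    exact le_min (Nat.le_floor hle) (by omega)

lemma descentProb_mul_measureReal_le (hc₁ : 0 ≤ c₁) (hc₁' : c₁ < 1) (hc₂ : 0 < c₂)
    (hpos : ∀ t, 1 ≤ t → ∀ ω, 1 ≤ X t ω) (hadapt : ∀ t, 1 ≤ t → Measurable[ℱ t] (X t))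
    (hdrift : DescentDrift μ ℱ X c₁ c₂) (x : ℕ) {t : ℕ} (ht : 1 ≤ t) {A : Set Ω}
    (hA : MeasurableSet[ℱ t] A) (hAx : ∀ ω ∈ A, X t ω ≤ x) :
    descentProb c₁ c₂ x * μ.real A ≤ μ.real (A ∩ hitsOneIn X t (t + descentDepth c₁ x)) := by
  induction x using Nat.strong_induction_on generalizing t A with
  | _ x ih =>
    set H := hitsOneIn X t (t + descentDepth c₁ x)
    rcases le_or_gt x 1 with h1 | h1
    · have hAH : A ⊆ H := fun ω hω =>
        ⟨t, le_rfl, by omega, le_antisymm ((hAx ω hω).trans h1) (hpos t ht ω)⟩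
      rw [descentProb_of_le_one h1, one_mul, Set.inter_eq_left.2 hAH]
    -- the two branches of the `min` defining `descentProb`: `X t < x` and `X t = x`
    set L := {ω | X t ω < x}
    have hL : MeasurableSet[ℱ t] L := measurableSet_lt (hadapt t ht) measurable_const
    have hlow : descentProb c₁ c₂ x * μ.real (A ∩ L) ≤ μ.real (A ∩ H ∩ L) := by
      calc descentProb c₁ c₂ x * μ.real (A ∩ L)
          ≤ descentProb c₁ c₂ (x - 1) * μ.real (A ∩ L) := by
            rw [descentProb_of_two_le h1]; gcongr; exact min_le_left _ _
        _ ≤ μ.real (A ∩ L ∩ hitsOneIn X t (t + descentDepth c₁ (x - 1))) :=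
            ih _ (by omega) ht (hA.inter hL) fun ω hω => Nat.le_sub_one_of_lt hω.2
        _ ≤ μ.real (A ∩ H ∩ L) := measureReal_mono fun ω ⟨⟨hωA, hωL⟩, hωH⟩ =>
            ⟨⟨hωA, hitsOneIn_mono le_rfl (by gcongr; exact descentDepth_mono hc₁ (by omega)) hωH⟩,
              hωL⟩
    have hhigh : descentProb c₁ c₂ x * μ.real (A \ L) ≤ μ.real ((A ∩ H) \ L) := by
      set n := descentStep c₁ x with hn
      set B := (A \ L) ∩ {ω | X (t + 1) ω ≤ n}
      have hB : MeasurableSet[ℱ (t + 1)] B := (ℱ.mono t.le_succ _ (hA.diff hL)).inter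
        (measurableSet_le (hadapt _ (by omega)) measurable_const)
      have hstep := one_sub_rpow_mul_measureReal_le hc₁' hadapt hdrift ht (by omega) (hA.diff hL)
        fun ω hω => le_antisymm (hAx ω hω.1) (not_lt.1 hω.2)
      calc descentProb c₁ c₂ x * μ.real (A \ L)
          ≤ descentProb c₁ c₂ n * ((1 - (x : ℝ) ^ (-c₂)) * μ.real (A \ L)) := by
            rw [descentProb_of_two_le h1, ← mul_assoc, mul_comm (descentProb _ _ n)]
            gcongr; exact min_le_right _ _
        _ ≤ descentProb c₁ c₂ n * μ.real B := by gcongr; exact (descentProb_pos hc₂ n).le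
        _ ≤ μ.real (B ∩ hitsOneIn X (t + 1) (t + 1 + descentDepth c₁ n)) :=
            ih n (descentStep_lt (by omega)) (by omega) hB fun ω hω => hω.2
        _ ≤ μ.real ((A ∩ H) \ L) := measureReal_mono fun ω ⟨⟨⟨hωA, hωL⟩, _⟩, hωH⟩ =>
            ⟨⟨hωA, hitsOneIn_mono (by omega)
              (by rw [descentDepth_of_two_le c₁ h1, ← hn]; omega) hωH⟩, hωL⟩
    have hL' := ℱ.le t _ hL
    rw [← measureReal_inter_add_sdiff hL' (s := A), ← measureReal_inter_add_sdiff hL' (s := A ∩ H),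
      mul_add]
    exact add_le_add hlow hhigh

lemma measureReal_compl_hitsOneIn_le [IsProbabilityMeasure μ] (hc₁ : 0 ≤ c₁) (hc₁' : c₁ < 1)
    (hc₂ : 0 < c₂) (hpos : ∀ t, 1 ≤ t → ∀ ω, 1 ≤ X t ω)
    (hadapt : ∀ t, 1 ≤ t → Measurable[ℱ t] (X t)) (hdrift : DescentDrift μ ℱ X c₁ c₂) {m : ℕ}
    (hle : ∀ t, 1 ≤ t → ∀ ω, X t ω ≤ m) {δ : ℝ} (hδ : ∀ x, δ ≤ descentProb c₁ c₂ x) (i : ℕ) :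
    μ.real (hitsOneIn X 1 (1 + i * descentDepth c₁ m))ᶜ ≤ (1 - δ) ^ i := by
  induction i with
  | zero => simp
  | succ i ih =>
    set D := descentDepth c₁ m
    set n := 1 + i * D
    set A := (hitsOneIn X 1 n)ᶜ
    set H := hitsOneIn X n (n + D)
    have hA : MeasurableSet[ℱ n] A := (measurableSet_hitsOneIn hadapt le_rfl).compl
    have hsub : (hitsOneIn X 1 (1 + (i + 1) * D))ᶜ ⊆ A \ H := by
      rw [show 1 + (i + 1) * D = n + D by ring]
      exact fun ω hω => ⟨fun h => hω (hitsOneIn_mono le_rfl (by omega) h),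
        fun h => hω (hitsOneIn_mono (by omega) le_rfl h)⟩
    have hsplit := measureReal_inter_add_sdiff (μ := μ) (s := A)
      (ℱ.le _ _ (measurableSet_hitsOneIn hadapt (a := n) (by omega) : MeasurableSet[ℱ (n + D)] H))
    have hmain := descentProb_mul_measureReal_le hc₁ hc₁' hc₂ hpos hadapt hdrift m
      (by omega : 1 ≤ n) hA fun ω _ => hle n (by omega) ω
    have hδ1 : δ ≤ 1 := (hδ 0).trans (descentProb_of_le_one zero_le_one).le
    calc μ.real (hitsOneIn X 1 (1 + (i + 1) * D))ᶜ ≤ μ.real (A \ H) := measureReal_mono hsub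
      _ ≤ (1 - δ) * μ.real A := by nlinarith [hδ m, measureReal_nonneg (μ := μ) (s := A)]
      _ ≤ (1 - δ) ^ (i + 1) := by rw [pow_succ']; gcongr

end process

lemma one_sub_pow_ceil_le_rpow_neg {δ k y : ℝ} (hδ : 0 < δ) (hδ1 : δ ≤ 1) (hy : 0 < y) :
    (1 - δ) ^ ⌈k * Real.log y / δ⌉₊ ≤ y ^ (-k) := by
  have hR : k * Real.log y ≤ δ * ⌈k * Real.log y / δ⌉₊ := (div_le_iff₀' hδ).1 (Nat.le_ceil _)
  calc (1 - δ) ^ ⌈k * Real.log y / δ⌉₊ ≤ Real.exp (-δ) ^ ⌈k * Real.log y / δ⌉₊ := by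
        exact pow_le_pow_left₀ (by linarith) (Real.one_sub_le_exp_neg δ) _
    _ = Real.exp (-(δ * ⌈k * Real.log y / δ⌉₊)) := by rw [← Real.exp_nat_mul]; ring_nf
    _ ≤ y ^ (-k) := by
        rw [Real.rpow_def_of_pos hy]; gcongr; linarith

lemma one_add_ceil_mul_descentDepth_le {c₁ δ k : ℝ} (hc₁ : 0 < c₁) (hc₁' : c₁ < 1) (hδ : 0 < δ)
    (hδ1 : δ ≤ 1) (hk : 0 ≤ k) {m : ℕ} (hm : max 1 (Real.log c₁⁻¹) ≤ Real.log m) :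
    1 + (⌈k * Real.log m / δ⌉₊ * descentDepth c₁ m : ℝ) ≤
      (1 + 2 * (k + 1) / (δ * Real.log c₁⁻¹)) * Real.log m ^ 2 := by
  set G := Real.log m
  set L := Real.log c₁⁻¹
  have hL : 0 < L := Real.log_pos (one_lt_inv_iff₀.2 ⟨hc₁, hc₁'⟩)
  have hG1 : 1 ≤ G := le_of_max_le_left hm
  have hm1 : 1 ≤ m := by
    exact_mod_cast ((Real.log_pos_iff (Nat.cast_nonneg m)).1 (by linarith)).le
  have hR : (⌈k * G / δ⌉₊ : ℝ) ≤ (k + 1) * G / δ := by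
    have := Nat.ceil_lt_add_one (show 0 ≤ k * G / δ by positivity)
    have : 1 ≤ G / δ := (one_le_div hδ).2 (hδ1.trans hG1)
    rw [add_mul, one_mul, add_div]; linarith
  have hD : (descentDepth c₁ m : ℝ) ≤ 2 * G / L := by
    have := descentDepth_le_log hc₁ hc₁' hm1
    have : 1 ≤ G / L := (one_le_div hL).2 (le_of_max_le_right hm)
    rw [two_mul, add_div]; linarith
  calc 1 + (⌈k * G / δ⌉₊ * descentDepth c₁ m : ℝ) ≤ 1 + (k + 1) * G / δ * (2 * G / L) := by
        gcongr
    _ ≤ (1 + 2 * (k + 1) / (δ * L)) * G ^ 2 := by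
        have : (k + 1) * G / δ * (2 * G / L) = 2 * (k + 1) / (δ * L) * G ^ 2 := by
          field_simp
        nlinarith

theorem hitting_time_bound_general (c₁ c₂ : ℝ) (hc₁ : 0 < c₁) (hc₁' : c₁ < 1)
    (hc₂ : 0 < c₂) :
    ∃ K : ℝ, 0 < K ∧ ∃ m₀ : ℕ, ∀ m : ℕ, m₀ ≤ m →
      ∀ {Ω : Type} [inst : MeasurableSpace Ω] (μ : Measure Ω)
        [IsProbabilityMeasure μ] (ℱ : Filtration ℕ inst) (X : ℕ → Ω → ℕ),
        (∀ t : ℕ, 1 ≤ t → ∀ ω : Ω, 1 ≤ X t ω ∧ X t ω ≤ m) →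
        (∀ t : ℕ, 1 ≤ t → Measurable[ℱ t] (X t)) →
        (∀ t : ℕ, 1 ≤ t → ∀ᵐ ω ∂μ,
          1 - (X t ω : ℝ) ^ (-c₂) ≤
            (μ[Set.indicator {ω' : Ω | (X (t + 1) ω' : ℝ) ≤ c₁ * (X t ω' : ℝ)}
                (fun _ => (1 : ℝ)) | ℱ t]) ω) →
        ENNReal.ofReal (1 - (m : ℝ) ^ (-(4 : ℝ))) ≤
          μ {ω : Ω | (∃ t : ℕ, 1 ≤ t ∧ X t ω = 1) ∧
              ((sInf {t : ℕ | 1 ≤ t ∧ X t ω = 1} : ℕ) : ℝ) ≤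
                K * Real.log m ^ 2} := by
  obtain ⟨δ, hδ, hδq⟩ := exists_pos_le_descentProb hc₁ hc₁' hc₂
  have hδ1 : δ ≤ 1 := (hδq 0).trans (descentProb_of_le_one zero_le_one).le
  set L := Real.log c₁⁻¹
  refine ⟨1 + 2 * (4 + 1) / (δ * L), ?_, ⌈Real.exp (max 1 L)⌉₊, ?_⟩
  · have : 0 < L := Real.log_pos (one_lt_inv_iff₀.2 ⟨hc₁, hc₁'⟩)
    positivity
  intro m hm Ω _ μ _ ℱ X hX hadapt hdrift
  have hmpos : (0 : ℝ) < m := (Real.exp_pos _).trans_le (Nat.ceil_le.1 hm)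
  have hlog : max 1 L ≤ Real.log m := (Real.le_log_iff_exp_le hmpos).2 (Nat.ceil_le.1 hm)
  set n := 1 + ⌈4 * Real.log m / δ⌉₊ * descentDepth c₁ m
  have hmiss : μ.real (hitsOneIn X 1 n)ᶜ ≤ (m : ℝ) ^ (-(4 : ℝ)) :=
    (measureReal_compl_hitsOneIn_le hc₁.le hc₁' hc₂ (fun t ht ω => (hX t ht ω).1) hadapt hdrift
      (fun t ht ω => (hX t ht ω).2) hδq _).trans (one_sub_pow_ceil_le_rpow_neg hδ hδ1 hmpos)
  have hn : (n : ℝ) ≤ (1 + 2 * (4 + 1) / (δ * L)) * Real.log m ^ 2 := by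
    simpa only [n, Nat.cast_add, Nat.cast_one, Nat.cast_mul] using
      one_add_ceil_mul_descentDepth_le hc₁ hc₁' hδ hδ1 (k := 4) (by norm_num) hlog
  rw [probReal_compl_eq_one_sub (ℱ.le n _ (measurableSet_hitsOneIn hadapt le_rfl))] at hmiss
  calc ENNReal.ofReal (1 - (m : ℝ) ^ (-(4 : ℝ))) ≤ ENNReal.ofReal (μ.real (hitsOneIn X 1 n)) :=
        ENNReal.ofReal_le_ofReal (by linarith)
    _ = μ (hitsOneIn X 1 n) := ofReal_measureReal
    _ ≤ _ := by
        refine measure_mono fun ω ⟨s, hs1, hsn, hs⟩ => ⟨⟨s, hs1, hs⟩, ?_⟩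
        have hT : sInf {t | 1 ≤ t ∧ X t ω = 1} ≤ s := Nat.sInf_le ⟨hs1, hs⟩
        exact (Nat.cast_le.2 (hT.trans hsn)).trans hn

/-- **Lemma (hilfslemmatheo).** Let `m ≥ 2` and let `(X_t)_{t≥1}` be a process
with values in `{1, …, m}`, adapted to a filtration `(ℱ_t)`, such that for
constants `c₁, c₂ ∈ (0,1)` and every `t ≥ 1`, almost surely
`Pr[X_{t+1} ≤ c₁·X_t | ℱ_t] ≥ 1 − X_t^(−c₂)`.  Let `T` be the first hitting
time of the state `1`.  Then there is a constant `K` (depending only on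
`c₁, c₂`) such that for all sufficiently large `m`,
`Pr[T ≤ K·(log m)²] ≥ 1 − m^(−4)`. -/
theorem hitting_time_bound (c₁ c₂ : ℝ) (hc₁ : 0 < c₁) (hc₁' : c₁ < 1)
    (hc₂ : 0 < c₂) (hc₂' : c₂ < 1) :
    ∃ K : ℝ, 0 < K ∧ ∃ m₀ : ℕ, ∀ m : ℕ, m₀ ≤ m →
      ∀ {Ω : Type} [inst : MeasurableSpace Ω] (μ : Measure Ω)
        [IsProbabilityMeasure μ] (ℱ : Filtration ℕ inst) (X : ℕ → Ω → ℕ),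
        (∀ t : ℕ, 1 ≤ t → ∀ ω : Ω, 1 ≤ X t ω ∧ X t ω ≤ m) →
        (∀ t : ℕ, 1 ≤ t → Measurable[ℱ t] (X t)) →
        (∀ t : ℕ, 1 ≤ t → ∀ᵐ ω ∂μ,
          1 - (X t ω : ℝ) ^ (-c₂) ≤
            (μ[Set.indicator {ω' : Ω | (X (t + 1) ω' : ℝ) ≤ c₁ * (X t ω' : ℝ)}
                (fun _ => (1 : ℝ)) | ℱ t]) ω) →
        ENNReal.ofReal (1 - (m : ℝ) ^ (-(4 : ℝ))) ≤
          μ {ω : Ω | (∃ t : ℕ, 1 ≤ t ∧ X t ω = 1) ∧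
              ((sInf {t : ℕ | 1 ≤ t ∧ X t ω = 1} : ℕ) : ℝ) ≤
                K * Real.log m ^ 2} :=
  hitting_time_bound_general c₁ c₂ hc₁ hc₁' hc₂
end

section
/- In the static placement model with C = 1: there exist constants δ > 0, γ > 0 and n₀ (depending only on α, c₁, c₂) such that for every n ≥ n₀ and every subset S of the n nodes, with probability at least 1 − n^{−γ}, at least δ·n cells of attractiveness 2 are chosen by no node of S in the round. -/
open scoped Classical
open Finset

/-!
Let `T` be the set of cells of attractiveness `2` and `X` the number of them chosen by no node
of `S`. As every attractiveness is at least `2` and there are `n` cells, a node picks a given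
cell of `T` with probability at most `1/n`, so the cell is missed with probability at least
`(1 - 1/n)^n ≥ 1/8`; with `#T ≥ c₁ n / 2^α` this gives `E X ≥ 2δn`. Two cells `v ≠ w` are
missed together with probability `(1 - p_v - p_w)^|S| ≤ (1 - p_v)^|S| (1 - p_w)^|S|`, so the
indicators are negatively correlated and `Var X ≤ #T ≤ n`. Chebyshev's inequality bounds
`P(X < δn)` by `n / (δn)^2`, which is at most `n^(-1/2)` once `n ≥ δ^(-4)`.
-/

section WeightedSums

variable {Ω : Type*} [Fintype Ω]

theorem sum_filter_lt_le_sum_mul_sq_div (μ : Ω → ℝ) (hμ : ∀ ω, 0 ≤ μ ω) (X : Ω → ℝ)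
    {m s : ℝ} (hs : s < m) :
    ∑ ω with X ω < s, μ ω ≤ (∑ ω, μ ω * (X ω - m) ^ 2) / (m - s) ^ 2 := by
  rw [le_div_iff₀ (by nlinarith), sum_mul]
  calc ∑ ω with X ω < s, μ ω * (m - s) ^ 2
      ≤ ∑ ω with X ω < s, μ ω * (X ω - m) ^ 2 := by
        refine sum_le_sum fun ω hω => mul_le_mul_of_nonneg_left ?_ (hμ ω)
        have := (mem_filter.mp hω).2
        nlinarith
    _ ≤ ∑ ω, μ ω * (X ω - m) ^ 2 :=
        sum_le_sum_of_subset_of_nonneg (filter_subset _ _) fun ω _ _ =>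
          mul_nonneg (hμ ω) (sq_nonneg _)

variable [DecidableEq Ω] {κ : Type*} (μ : Ω → ℝ) (T : Finset κ) (A : κ → Finset Ω)

theorem sum_mul_card_filter_mem :
    ∑ ω, μ ω * #{v ∈ T | ω ∈ A v} = ∑ v ∈ T, ∑ ω ∈ A v, μ ω := by
  simp only [natCast_card_filter, mul_sum, mul_ite, mul_one, mul_zero]
  rw [sum_comm]
  refine sum_congr rfl fun v _ => ?_
  rw [← sum_filter, filter_mem_eq_inter, univ_inter]

theorem sum_mul_card_filter_mem_sq :
    ∑ ω, μ ω * (#{v ∈ T | ω ∈ A v} : ℝ) ^ 2 = ∑ v ∈ T, ∑ w ∈ T, ∑ ω ∈ A v ∩ A w, μ ω := by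
  have hsq (ω : Ω) : (#{v ∈ T | ω ∈ A v} : ℝ) ^ 2 =
      ∑ v ∈ T, ∑ w ∈ T, if ω ∈ A v ∩ A w then 1 else 0 := by
    rw [natCast_card_filter, sq, sum_mul_sum]
    simp only [ite_zero_mul_ite_zero, mul_one, mem_inter]
  simp only [hsq, mul_sum, mul_ite, mul_one, mul_zero]
  rw [sum_comm]
  refine sum_congr rfl fun v _ => ?_
  rw [sum_comm]
  refine sum_congr rfl fun w _ => ?_
  rw [← sum_filter, filter_mem_eq_inter, univ_inter]

theorem sum_mul_sq_card_filter_mem_sub_le (hμ : ∑ ω, μ ω = 1)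
    (hneg : ∀ v ∈ T, ∀ w ∈ T, v ≠ w →
      ∑ ω ∈ A v ∩ A w, μ ω ≤ (∑ ω ∈ A v, μ ω) * ∑ ω ∈ A w, μ ω) :
    ∑ ω, μ ω * (#{v ∈ T | ω ∈ A v} - ∑ v ∈ T, ∑ ω ∈ A v, μ ω) ^ 2 ≤ #T := by
  set P : κ → ℝ := fun v => ∑ ω ∈ A v, μ ω
  set m := ∑ v ∈ T, P v
  have hpair : ∀ v ∈ T, ∀ w ∈ T,
      ∑ ω ∈ A v ∩ A w, μ ω ≤ P v * P w + if v = w then 1 else 0 := by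
    intro v hv w hw
    by_cases hvw : v = w
    · subst hvw
      simp only [inter_self, if_true]
      nlinarith [sq_nonneg (P v - 1 / 2)]
    · simpa [hvw] using hneg v hv w hw hvw
  have hsecond : ∑ ω, μ ω * (#{v ∈ T | ω ∈ A v} : ℝ) ^ 2 ≤ m ^ 2 + #T := by
    rw [sum_mul_card_filter_mem_sq]
    calc ∑ v ∈ T, ∑ w ∈ T, ∑ ω ∈ A v ∩ A w, μ ω
        ≤ ∑ v ∈ T, ∑ w ∈ T, (P v * P w + if v = w then 1 else 0) :=
          sum_le_sum fun v hv => sum_le_sum fun w hw => hpair v hv w hw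
      _ = m ^ 2 + #T := by
          simp [sum_add_distrib, sq, sum_mul_sum, m]
  calc ∑ ω, μ ω * (#{v ∈ T | ω ∈ A v} - m) ^ 2
      = ∑ ω, μ ω * (#{v ∈ T | ω ∈ A v} : ℝ) ^ 2
          - 2 * m * ∑ ω, μ ω * #{v ∈ T | ω ∈ A v} + m ^ 2 * ∑ ω, μ ω := by
        simp only [mul_sum, ← sum_sub_distrib, ← sum_add_distrib]
        exact sum_congr rfl fun ω _ => by ring
    _ ≤ #T := by
        rw [sum_mul_card_filter_mem, hμ]
        linarith

end WeightedSums

section ProductWeights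

variable {ι β : Type*} [Fintype ι] [DecidableEq ι] [Fintype β] [DecidableEq β]

def avoiding (S : Finset ι) (T : Finset β) : Finset (ι → β) :=
  {f | ∀ s ∈ S, f s ∉ T}

theorem avoiding_inter_avoiding (S : Finset ι) (T U : Finset β) :
    avoiding S T ∩ avoiding S U = avoiding S (T ∪ U) := by
  ext f
  simp only [avoiding, mem_inter, mem_filter, mem_univ, true_and, mem_union, not_or]
  exact ⟨fun h s hs => ⟨h.1 s hs, h.2 s hs⟩,
    fun h => ⟨fun s hs => (h s hs).1, fun s hs => (h s hs).2⟩⟩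

variable {p : β → ℝ}

theorem sum_avoiding_prod (hp : ∑ x, p x = 1) (S : Finset ι) (T : Finset β) :
    ∑ f ∈ avoiding S T, ∏ i, p (f i) = (1 - ∑ x ∈ T, p x) ^ #S := by
  have hpi : avoiding S T = Fintype.piFinset fun i => if i ∈ S then Tᶜ else univ := by
    ext f
    simp only [avoiding, mem_filter, mem_univ, true_and, Fintype.mem_piFinset]
    refine ⟨fun h i => ?_, fun h s hs => ?_⟩
    · split_ifs with hi
      · exact mem_compl.mpr (h i hi)
      · exact mem_univ _
    · simpa [hs] using h s
  have hcompl : ∑ x ∈ Tᶜ, p x = 1 - ∑ x ∈ T, p x := by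
    rw [← hp, ← sum_compl_add_sum T, add_sub_cancel_right]
  rw [hpi, ← prod_univ_sum]
  simp only [apply_ite (fun t : Finset β => ∑ x ∈ t, p x), hcompl, hp]
  rw [Fintype.prod_ite_mem, prod_const]

theorem sum_avoiding_singleton_prod (hp : ∑ x, p x = 1) (S : Finset ι) (v : β) :
    ∑ f ∈ avoiding S {v}, ∏ i, p (f i) = (1 - p v) ^ #S := by
  simpa using sum_avoiding_prod hp S {v}

theorem sum_avoiding_inter_prod_le (hp₀ : ∀ x, 0 ≤ p x) (hp : ∑ x, p x = 1)
    (S : Finset ι) {v w : β} (hvw : v ≠ w) :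
    ∑ f ∈ avoiding S {v} ∩ avoiding S {w}, ∏ i, p (f i) ≤ (1 - p v) ^ #S * (1 - p w) ^ #S := by
  have hpair : p v + p w ≤ 1 := by
    have := sum_le_sum_of_subset_of_nonneg (subset_univ {v, w}) fun x _ _ => hp₀ x
    rwa [sum_pair hvw, hp] at this
  rw [avoiding_inter_avoiding, ← insert_eq, sum_avoiding_prod hp, sum_pair hvw, ← mul_pow]
  exact pow_le_pow_left₀ (by linarith) (by nlinarith [hp₀ v, hp₀ w]) _

theorem sum_prod_filter_card_avoiding_lt_le (hp₀ : ∀ x, 0 ≤ p x) (hp : ∑ x, p x = 1)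
    (S : Finset ι) (T : Finset β) {q s : ℝ} (hq : ∀ v ∈ T, q ≤ (1 - p v) ^ #S)
    (hs : s < q * #T) :
    ∑ f : ι → β with (#{v ∈ T | f ∈ avoiding S {v}} : ℝ) < s, ∏ i, p (f i) ≤
      #T / (q * #T - s) ^ 2 := by
  set m := ∑ v ∈ T, ∑ f ∈ avoiding S {v}, ∏ i, p (f i)
  have hm : q * #T ≤ m := by
    rw [mul_comm, ← nsmul_eq_mul, ← sum_const]
    exact sum_le_sum fun v hv => (hq v hv).trans_eq (sum_avoiding_singleton_prod hp S v).symm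
  have hmass : ∑ f : ι → β, ∏ i, p (f i) = 1 := by
    rw [← Fintype.prod_sum, hp, prod_const_one]
  have hvar := sum_mul_sq_card_filter_mem_sub_le (fun f : ι → β => ∏ i, p (f i)) T
    (fun v => avoiding S {v}) hmass fun v _ w _ hvw => by
      simpa only [sum_avoiding_singleton_prod hp] using sum_avoiding_inter_prod_le hp₀ hp S hvw
  calc ∑ f : ι → β with (#{v ∈ T | f ∈ avoiding S {v}} : ℝ) < s, ∏ i, p (f i)
      ≤ (∑ f : ι → β, (∏ i, p (f i)) * (#{v ∈ T | f ∈ avoiding S {v}} - m) ^ 2) / (m - s) ^ 2 :=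
        sum_filter_lt_le_sum_mul_sq_div _ (fun f => prod_nonneg fun i _ => hp₀ (f i)) _
          (hs.trans_le hm)
    _ ≤ #T / (q * #T - s) ^ 2 := by gcongr

end ProductWeights

theorem inv_eight_le_one_sub_inv_pow {n : ℕ} (hn : 2 ≤ n) : (8 : ℝ)⁻¹ ≤ (1 - (n : ℝ)⁻¹) ^ n := by
  obtain ⟨m, rfl⟩ : ∃ m, n = m + 1 := ⟨n - 1, by omega⟩
  have hm : (1 : ℝ) ≤ m := by exact_mod_cast (by omega : 1 ≤ m)
  have hinv : 1 - ((m + 1 : ℕ) : ℝ)⁻¹ = (1 + (m : ℝ)⁻¹)⁻¹ := by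
    push_cast
    field_simp
    ring
  have he : (1 + (m : ℝ)⁻¹) ^ m ≤ 4 := Real.one_add_inv_pow_le_exp.trans (by
    linarith [Real.exp_one_lt_d9])
  have h2 : 1 + (m : ℝ)⁻¹ ≤ 2 := by linarith [inv_le_one_of_one_le₀ hm]
  rw [hinv, inv_pow, pow_succ]
  calc (8 : ℝ)⁻¹ = (4 * 2)⁻¹ := by norm_num
    _ ≤ ((1 + (m : ℝ)⁻¹) ^ m * (1 + (m : ℝ)⁻¹))⁻¹ := by gcongr

theorem div_mul_self_sq_le_rpow_neg_half {δ x : ℝ} (hδ : 0 < δ) (hx : δ⁻¹ ^ 4 ≤ x) :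
    x / (δ * x) ^ 2 ≤ x ^ (-(1 / 2) : ℝ) := by
  have hx₀ : 0 < x := lt_of_lt_of_le (by positivity) hx
  have hsqrt : δ⁻¹ ^ 2 ≤ √x := Real.le_sqrt_of_sq_le (by rw [← pow_mul]; exact hx)
  have hδsqrt : 1 ≤ δ ^ 2 * √x := by
    rw [inv_pow] at hsqrt
    rwa [← div_le_iff₀' (by positivity), one_div]
  calc x / (δ * x) ^ 2 = (δ ^ 2 * (√x * √x))⁻¹ := by
        rw [Real.mul_self_sqrt hx₀.le]
        field_simp
    _ ≤ (√x)⁻¹ := by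
        gcongr
        nlinarith [Real.sqrt_pos.mpr hx₀]
    _ = x ^ (-(1 / 2) : ℝ) := by rw [Real.rpow_neg hx₀.le, ← Real.sqrt_eq_rpow]

section Model

variable {N : ℕ} {a : Fin N → ℕ}

theorem cellProb_nonneg (a : Fin N → ℕ) (v : Fin N) : 0 ≤ cellProb a v := by
  unfold cellProb
  positivity

theorem sum_cellProb (ha : ∀ v, 0 < a v) (hN : 0 < N) : ∑ v, cellProb a v = 1 := by
  have hpos : 0 < ∑ w, (a w : ℝ) :=
    sum_pos (fun w _ => by exact_mod_cast ha w) ⟨⟨0, hN⟩, mem_univ _⟩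
  simp only [cellProb, ← sum_div, div_self hpos.ne']

theorem cellProb_le_div (ha : ∀ v, 2 ≤ a v) (v : Fin N) : cellProb a v ≤ a v / (2 * N) := by
  have hsum : 2 * (N : ℝ) ≤ ∑ w, (a w : ℝ) := by
    simpa [mul_comm] using card_nsmul_le_sum univ (fun w => (a w : ℝ)) 2
      fun w _ => by exact_mod_cast ha w
  have hN : (0 : ℝ) < N := by exact_mod_cast v.pos
  exact div_le_div_of_nonneg_left (by positivity) (by positivity) hsum

theorem one_sub_roundProb (n : ℕ) (ha : ∀ v, 0 < a v) (hN : 0 < N) (E : Set (Fin n → Fin N)) :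
    1 - roundProb n a E = ∑ f with f ∉ E, ∏ i, cellProb a (f i) := by
  have hmass : ∑ f : Fin n → Fin N, ∏ i, cellProb a (f i) = 1 := by
    rw [← Fintype.prod_sum, sum_cellProb ha hN, prod_const_one]
  rw [← hmass, roundProb, ← sum_filter_add_sum_filter_not univ (· ∈ E)]
  simp [Set.indicator_apply, sum_ite]

theorem inv_eight_le_one_sub_cellProb_pow (ha : ∀ v, 2 ≤ a v) (hN : 2 ≤ N) {v : Fin N}
    (hv : a v = 2) {k : ℕ} (hk : k ≤ N) : (8 : ℝ)⁻¹ ≤ (1 - cellProb a v) ^ k := by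
  have hpv : cellProb a v ≤ (N : ℝ)⁻¹ := by
    have := cellProb_le_div ha v
    rwa [hv, Nat.cast_two, div_mul_cancel_left₀ two_ne_zero] at this
  have hNinv : (N : ℝ)⁻¹ ≤ 2⁻¹ := inv_anti₀ two_pos (by exact_mod_cast hN)
  have h₀ : 0 ≤ 1 - (N : ℝ)⁻¹ := by linarith
  calc (8 : ℝ)⁻¹ ≤ (1 - (N : ℝ)⁻¹) ^ N := inv_eight_le_one_sub_inv_pow hN
    _ ≤ (1 - (N : ℝ)⁻¹) ^ k := pow_le_pow_of_le_one h₀ (by simp) hk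
    _ ≤ (1 - cellProb a v) ^ k := by gcongr

namespace PlacementModel

variable {C α c₁ c₂ : ℝ} {n : ℕ}

theorem card_eq_of_one (h : PlacementModel 1 α c₁ c₂ n N a) : N = n := by
  simpa using h.hN

theorem le_card_filter_eq_two (h : PlacementModel C α c₁ c₂ n N a) (hn : 2 ^ α ≤ C * n) :
    c₁ * C * n / 2 ^ α ≤ #{v | a v = 2} := by
  have h2 : (2 : ℝ) ≤ (C * n) ^ (1 / α) := by
    rw [one_div, Real.le_rpow_inv_iff_of_pos zero_le_two (by have := h.hC; positivity)
      (by linarith [h.hα])]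
    exact hn
  simpa using h.hcount_lb 2 le_rfl (by exact_mod_cast h2)

end PlacementModel

end Model

theorem many_empty_cells_general (α c₁ c₂ : ℝ)
    (hc₁ : 0 < c₁) :
    ∃ δ γ : ℝ, 0 < δ ∧ 0 < γ ∧ ∃ n₀ : ℕ, ∀ n : ℕ, n₀ ≤ n →
      ∀ (N : ℕ) (a : Fin N → ℕ), PlacementModel 1 α c₁ c₂ n N a →
        ∀ S : Finset (Fin n),
          1 - (n : ℝ) ^ (-γ) ≤
            roundProb n a {f |
              δ * (n : ℝ) ≤
                ((Finset.univ.filter (fun v : Fin N =>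
                  a v = 2 ∧ ∀ s ∈ S, f s ≠ v)).card : ℝ)} := by
  set δ := c₁ / (16 * 2 ^ α)
  have hδ : 0 < δ := by positivity
  refine ⟨δ, 1 / 2, hδ, one_half_pos, max 2 (max ⌈(2 : ℝ) ^ α⌉₊ ⌈δ⁻¹ ^ 4⌉₊), ?_⟩
  intro n hn N a hM S
  obtain rfl : N = n := hM.card_eq_of_one
  simp only [max_le_iff, Nat.ceil_le] at hn
  obtain ⟨hN₂, hNα, hNδ⟩ := hn
  have ha₀ (v : Fin N) : 0 < a v := two_pos.trans_le (hM.ha_lb v)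
  set T : Finset (Fin N) := {v | a v = 2}
  have hT : 16 * δ * N ≤ #T := by
    have h16 : 16 * δ * N = c₁ * 1 * N / 2 ^ α := by
      simp only [δ]
      field_simp
    exact h16.trans_le (hM.le_card_filter_eq_two (by simpa using hNα))
  have hTN : (#T : ℝ) ≤ N := by exact_mod_cast (card_le_univ T).trans_eq (Fintype.card_fin N)
  have hδN : 0 < δ * N := by positivity
  have hbad := sum_prod_filter_card_avoiding_lt_le (cellProb_nonneg a) (sum_cellProb ha₀ hM.hn)
    S T (fun v hv => inv_eight_le_one_sub_cellProb_pow hM.ha_lb hN₂ (mem_filter.mp hv).2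
      ((card_le_univ S).trans_eq (Fintype.card_fin N))) (s := δ * N) (by linarith)
  rw [sub_le_comm, one_sub_roundProb N ha₀ hM.hn]
  calc _ = ∑ f with (#{v ∈ T | f ∈ avoiding S {v}} : ℝ) < δ * N, ∏ i, cellProb a (f i) := by
        refine sum_congr (filter_congr fun f _ => ?_) fun _ _ => rfl
        simp [T, avoiding, filter_filter]
    _ ≤ #T / (8⁻¹ * #T - δ * N) ^ 2 := hbad
    _ ≤ N / (δ * N) ^ 2 := by
        gcongr
        linarith
    _ ≤ N ^ (-(1 / 2) : ℝ) := div_mul_self_sq_le_rpow_neg_half hδ hNδ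

/-- In the static placement model with `C = 1`: there exist constants
`δ, γ > 0` and `n₀` (depending only on `α, c₁, c₂`) such that for every
`n ≥ n₀` and every subset `S` of the `n` nodes, with probability at least
`1 − n^(−γ)` at least `δ·n` cells of attractiveness `2` are chosen by no node
of `S` in the round. -/
theorem many_empty_cells (α c₁ c₂ : ℝ) (hα : 2 < α)
    (hc₁ : 0 < c₁) (hc₁₂ : c₁ ≤ c₂) :
    ∃ δ γ : ℝ, 0 < δ ∧ 0 < γ ∧ ∃ n₀ : ℕ, ∀ n : ℕ, n₀ ≤ n →
      ∀ (N : ℕ) (a : Fin N → ℕ), PlacementModel 1 α c₁ c₂ n N a →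
        ∀ S : Finset (Fin n),
          1 - (n : ℝ) ^ (-γ) ≤
            roundProb n a {f |
              δ * (n : ℝ) ≤
                ((Finset.univ.filter (fun v : Fin N =>
                  a v = 2 ∧ ∀ s ∈ S, f s ≠ v)).card : ℝ)} :=
  many_empty_cells_general α c₁ c₂ hc₁
end
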